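/- arXiv:2006.03538 — 2 statements merged into one kernel-verified Lean document; each statement's English description precedes it below -/
import Mathlib

section
/- Let u, v be linearly independent unit vectors in ℝ² and let f = (f₁, f₂) be a vector field on ℝ² with f₁, f₂ ∈ C²_c(ℝ²). Then for every x ∈ ℝ², curl f(x) = (1/det(v,u)) · D_u D_v (L f)(x). -/
/-! Differentiating under the integral sign gives `D_a (X_w h) = X_w (D_a h)`, and the fundamental
theorem of calculus along the ray gives `X_w (D_w h) = -h`. Hence `D_v (L f) = -X_u (D_v (f·u)) - f·v`
and `D_u D_v (L f) = D_v (f·u) - D_u (f·v)`, which expands to `det(v,u) · curl f`. -/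

open MeasureTheory Matrix

noncomputable section

/-- Dot product on ℝ². -/
def dot2 (u v : ℝ × ℝ) : ℝ := u.1 * v.1 + u.2 * v.2

/-- `x^⊥ = (-x₂, x₁)`. -/
def perp2 (x : ℝ × ℝ) : ℝ × ℝ := (-x.2, x.1)

/-- Divergent beam transform `X_u h (x) = ∫₀^∞ h(x + t u) dt`. -/
def Xbeam (u : ℝ × ℝ) (h : ℝ × ℝ → ℝ) (x : ℝ × ℝ) : ℝ :=
  ∫ t in Set.Ioi (0 : ℝ), h (x + t • u)

/-- First moment divergent beam transform `X¹_u h (x) = ∫₀^∞ t h(x + t u) dt`. -/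
def Xmom (u : ℝ × ℝ) (h : ℝ × ℝ → ℝ) (x : ℝ × ℝ) : ℝ :=
  ∫ t in Set.Ioi (0 : ℝ), t * h (x + t • u)

/-- Directional derivative `D_u h = u · ∇ h`. -/
def Ddir (u : ℝ × ℝ) (h : ℝ × ℝ → ℝ) (x : ℝ × ℝ) : ℝ := fderiv ℝ h x u

/-- Twice continuously differentiable, compactly supported. -/
def IsC2c (h : ℝ × ℝ → ℝ) : Prop := ContDiff ℝ 2 h ∧ HasCompactSupport h

/-- `div f = ∂f₁/∂x₁ + ∂f₂/∂x₂`. -/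
def divf (f₁ f₂ : ℝ × ℝ → ℝ) (x : ℝ × ℝ) : ℝ :=
  fderiv ℝ f₁ x (1, 0) + fderiv ℝ f₂ x (0, 1)

/-- `curl f = ∂f₂/∂x₁ - ∂f₁/∂x₂`. -/
def curlf (f₁ f₂ : ℝ × ℝ → ℝ) (x : ℝ × ℝ) : ℝ :=
  fderiv ℝ f₂ x (1, 0) - fderiv ℝ f₁ x (0, 1)

/-- Longitudinal V-line transform `L f = -X_u (f·u) + X_v (f·v)`. -/
def VlineL (u v : ℝ × ℝ) (f₁ f₂ : ℝ × ℝ → ℝ) (x : ℝ × ℝ) : ℝ :=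
  - Xbeam u (fun y => f₁ y * u.1 + f₂ y * u.2) x
  + Xbeam v (fun y => f₁ y * v.1 + f₂ y * v.2) x

/-- Transverse V-line transform `T f = -X_u (f·u^⊥) + X_v (f·v^⊥)`. -/
def VlineT (u v : ℝ × ℝ) (f₁ f₂ : ℝ × ℝ → ℝ) (x : ℝ × ℝ) : ℝ :=
  - Xbeam u (fun y => f₁ y * (perp2 u).1 + f₂ y * (perp2 u).2) x
  + Xbeam v (fun y => f₁ y * (perp2 v).1 + f₂ y * (perp2 v).2) x

/-- First moment longitudinal V-line transform `I f = -X¹_u (f·u) + X¹_v (f·v)`. -/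
def VmomL (u v : ℝ × ℝ) (f₁ f₂ : ℝ × ℝ → ℝ) (x : ℝ × ℝ) : ℝ :=
  - Xmom u (fun y => f₁ y * u.1 + f₂ y * u.2) x
  + Xmom v (fun y => f₁ y * v.1 + f₂ y * v.2) x

/-- First moment transverse V-line transform `J f = -X¹_u (f·u^⊥) + X¹_v (f·v^⊥)`. -/
def VmomT (u v : ℝ × ℝ) (f₁ f₂ : ℝ × ℝ → ℝ) (x : ℝ × ℝ) : ℝ :=
  - Xmom u (fun y => f₁ y * (perp2 u).1 + f₂ y * (perp2 u).2) x
  + Xmom v (fun y => f₁ y * (perp2 v).1 + f₂ y * (perp2 v).2) x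

/-- Radon transform `R h (ψ, s) = ∫_ℝ h (s ψ + t ψ^⊥) dt`. -/
def Radon2 (h : ℝ × ℝ → ℝ) (ψ : ℝ × ℝ) (s : ℝ) : ℝ :=
  ∫ t : ℝ, h (s • ψ + t • perp2 ψ)

/-- The (vector-valued) star transform. -/
def starS (m : ℕ) (γ : Fin m → ℝ × ℝ) (c : Fin m → ℝ)
    (f₁ f₂ : ℝ × ℝ → ℝ) (x : ℝ × ℝ) : ℝ × ℝ :=
  ∑ i, c i •
    (Xbeam (γ i) (fun y => f₁ y * (γ i).1 + f₂ y * (γ i).2) x,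
     Xbeam (γ i) (fun y => f₁ y * (perp2 (γ i)).1 + f₂ y * (perp2 (γ i)).2) x)

/-- `γ(ψ) = -∑ cᵢ γᵢ / (ψ·γᵢ)`. -/
def starGamma (m : ℕ) (γ : Fin m → ℝ × ℝ) (c : Fin m → ℝ) (ψ : ℝ × ℝ) : ℝ × ℝ :=
  - ∑ i, (c i / dot2 ψ (γ i)) • γ i

/-- A star configuration is symmetric if `m = 2k` and, after re-indexing by a
permutation, `γᵢ = -γ_{k+i}` and `cᵢ = -c_{k+i}` for `i = 1, …, k`. -/
def StarSymmetric (m : ℕ) (γ : Fin m → ℝ × ℝ) (c : Fin m → ℝ) : Prop :=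
  ∃ k : ℕ, ∃ hk : m = 2 * k, ∃ σ : Equiv.Perm (Fin m),
    ∀ i : Fin m, ∀ hi : (i : ℕ) < k,
      γ (σ i) = - γ (σ ⟨(i : ℕ) + k, by omega⟩) ∧
      c (σ i) = - c (σ ⟨(i : ℕ) + k, by omega⟩)

open Set Filter Metric Topology Pointwise

section RayIntegral

variable {E F : Type*} [NormedAddCommGroup E] [NormedSpace ℝ E] [NormedAddCommGroup F]

lemma isClosedEmbedding_ray {w : E} (hw : w ≠ 0) (x : E) :
    IsClosedEmbedding fun t : ℝ => x + t • w :=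
  (Homeomorph.addLeft x).isClosedEmbedding.comp (isClosedEmbedding_smul_left hw)

lemma HasCompactSupport.comp_ray {h : E → F} (hs : HasCompactSupport h) {w : E} (hw : w ≠ 0)
    (x : E) : HasCompactSupport fun t : ℝ => h (x + t • w) :=
  hs.comp_isClosedEmbedding (isClosedEmbedding_ray hw x)

lemma integrableOn_Ioi_comp_ray {h : E → F} (hc : Continuous h) (hs : HasCompactSupport h)
    {w : E} (hw : w ≠ 0) (x : E) : IntegrableOn (fun t : ℝ => h (x + t • w)) (Ioi 0) :=
  (Continuous.integrable_of_hasCompactSupport (hc.comp (isClosedEmbedding_ray hw x).continuous)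
    (hs.comp_ray hw x)).integrableOn

variable [NormedSpace ℝ F]

lemma hasFDerivAt_integral_Ioi_ray [ProperSpace E] {h : E → F} (hh : ContDiff ℝ 1 h)
    (hs : HasCompactSupport h) {w : E} (hw : w ≠ 0) (x₀ : E) :
    HasFDerivAt (fun x => ∫ t in Ioi (0 : ℝ), h (x + t • w))
      (∫ t in Ioi (0 : ℝ), fderiv ℝ h (x₀ + t • w)) x₀ := by
  have hh' : Continuous (fderiv ℝ h) := hh.continuous_fderiv one_ne_zero
  obtain ⟨C, hC⟩ := (hs.fderiv ℝ).exists_bound_of_continuous hh'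
  -- the times `t` at which `x + t • w` meets the support of `fderiv ℝ h` for some `x` near `x₀`
  set K := (fun t : ℝ => t • w) ⁻¹' (tsupport (fderiv ℝ h) + closedBall (-x₀) 1)
  have hK : IsCompact K := (isClosedEmbedding_smul_left hw).isCompact_preimage
    ((hs.fderiv ℝ).isCompact.add (isCompact_closedBall (-x₀) 1))
  refine hasFDerivAt_integral_of_dominated_of_fderiv_le (closedBall_mem_nhds x₀ one_pos)
    (F' := fun x t => fderiv ℝ h (x + t • w)) (bound := K.indicator fun _ => C)
    (Eventually.of_forall fun x =>
      (hh.continuous.comp (isClosedEmbedding_ray hw x).continuous).aestronglyMeasurable)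
    (integrableOn_Ioi_comp_ray hh.continuous hs hw x₀)
    (hh'.comp (isClosedEmbedding_ray hw x₀).continuous).aestronglyMeasurable ?_
    ((integrable_indicator_iff hK.measurableSet).2 (integrableOn_const hK.measure_lt_top.ne)).restrict
    (ae_of_all _ fun t x _ => ?_)
  · refine ae_of_all _ fun t x hx => ?_
    by_cases ht : t ∈ K
    · simpa [ht] using hC _
    · have : x + t • w ∉ tsupport (fderiv ℝ h) := fun hmem =>
        ht ⟨_, hmem, -x, by rwa [mem_closedBall, dist_neg_neg], by simp⟩
      simp [ht, image_eq_zero_of_notMem_tsupport this]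
  · exact (hh.differentiable one_ne_zero _).hasFDerivAt.comp x
      ((hasFDerivAt_id x).add_const (t • w))

variable [CompleteSpace F]

lemma integral_Ioi_fderiv_ray {h : E → F} (hh : ContDiff ℝ 1 h) (hs : HasCompactSupport h)
    {w : E} (hw : w ≠ 0) (x : E) :
    ∫ t in Ioi (0 : ℝ), fderiv ℝ h (x + t • w) w = -h x := by
  have hray : ContDiff ℝ 1 fun t : ℝ => x + t • w :=
    contDiff_const.add (contDiff_id.smul contDiff_const)
  have hderiv (t : ℝ) : deriv (h ∘ fun t : ℝ => x + t • w) t = fderiv ℝ h (x + t • w) w := by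
    have : HasDerivAt (fun t : ℝ => x + t • w) w t := by
      simpa using ((hasDerivAt_id t).smul_const w).const_add x
    exact ((hh.differentiable one_ne_zero _).hasFDerivAt.comp_hasDerivAt t this).deriv
  simpa [hderiv] using (hs.comp_ray hw x).integral_Ioi_deriv_eq (hh.comp hray) 0

end RayIntegral

lemma ContinuousLinearMap.apply_eq_fst_mul_add_snd_mul (φ : ℝ × ℝ →L[ℝ] ℝ) (a : ℝ × ℝ) :
    φ a = a.1 * φ (1, 0) + a.2 * φ (0, 1) :=
  calc φ a = φ (a.1 • (1, 0) + a.2 • (0, 1)) := by congr 1; ext <;> simp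
    _ = a.1 * φ (1, 0) + a.2 * φ (0, 1) := by
      rw [map_add, map_smul, map_smul, smul_eq_mul, smul_eq_mul]

section DirectionalDerivative

variable {h A B : ℝ × ℝ → ℝ}

lemma ContDiff.Ddir {n : ℕ} (hh : ContDiff ℝ (n + 1) h) (a : ℝ × ℝ) : ContDiff ℝ n (Ddir a h) :=
  (hh.fderiv_right le_rfl).clm_apply contDiff_const

lemma HasCompactSupport.Ddir (hs : HasCompactSupport h) (a : ℝ × ℝ) :
    HasCompactSupport (Ddir a h) :=
  hs.fderiv_apply ℝ a

lemma Ddir_add (hA : Differentiable ℝ A) (hB : Differentiable ℝ B) (a : ℝ × ℝ) :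
    Ddir a (A + B) = Ddir a A + Ddir a B := by
  funext x
  simp [Ddir, fderiv_add (hA x) (hB x)]

lemma Ddir_neg (a : ℝ × ℝ) : Ddir a (-A) = -Ddir a A := by
  funext x
  simp [Ddir, fderiv_neg]

end DirectionalDerivative

section Beam

variable {h : ℝ × ℝ → ℝ} {w : ℝ × ℝ}

lemma hasFDerivAt_Xbeam (hh : ContDiff ℝ 1 h) (hs : HasCompactSupport h) (hw : w ≠ 0)
    (x : ℝ × ℝ) : HasFDerivAt (Xbeam w h) (∫ t in Ioi (0 : ℝ), fderiv ℝ h (x + t • w)) x :=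
  hasFDerivAt_integral_Ioi_ray hh hs hw x

lemma differentiable_Xbeam (hh : ContDiff ℝ 1 h) (hs : HasCompactSupport h) (hw : w ≠ 0) :
    Differentiable ℝ (Xbeam w h) :=
  fun x => (hasFDerivAt_Xbeam hh hs hw x).differentiableAt

lemma Ddir_Xbeam (hh : ContDiff ℝ 1 h) (hs : HasCompactSupport h) (hw : w ≠ 0) (a : ℝ × ℝ) :
    Ddir a (Xbeam w h) = Xbeam w (Ddir a h) := by
  funext x
  rw [Ddir, (hasFDerivAt_Xbeam hh hs hw x).fderiv, ContinuousLinearMap.integral_apply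
    (integrableOn_Ioi_comp_ray (hh.continuous_fderiv one_ne_zero) (hs.fderiv ℝ) hw x)]
  rfl

lemma Xbeam_Ddir_self (hh : ContDiff ℝ 1 h) (hs : HasCompactSupport h) (hw : w ≠ 0) :
    Xbeam w (Ddir w h) = -h :=
  funext (integral_Ioi_fderiv_ray hh hs hw)

end Beam

def fieldDot (f₁ f₂ : ℝ × ℝ → ℝ) (u : ℝ × ℝ) (y : ℝ × ℝ) : ℝ := f₁ y * u.1 + f₂ y * u.2

section FieldDot

variable {f₁ f₂ : ℝ × ℝ → ℝ}

lemma ContDiff.fieldDot {n : WithTop ℕ∞} (hf₁ : ContDiff ℝ n f₁) (hf₂ : ContDiff ℝ n f₂)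
    (u : ℝ × ℝ) : ContDiff ℝ n (fieldDot f₁ f₂ u) :=
  (hf₁.mul contDiff_const).add (hf₂.mul contDiff_const)

lemma HasCompactSupport.fieldDot (hf₁ : HasCompactSupport f₁) (hf₂ : HasCompactSupport f₂)
    (u : ℝ × ℝ) : HasCompactSupport (fieldDot f₁ f₂ u) :=
  hf₁.mul_right.add hf₂.mul_right

lemma Ddir_fieldDot {x : ℝ × ℝ} (hf₁ : DifferentiableAt ℝ f₁ x) (hf₂ : DifferentiableAt ℝ f₂ x)
    (a u : ℝ × ℝ) : Ddir a (fieldDot f₁ f₂ u) x = Ddir a f₁ x * u.1 + Ddir a f₂ x * u.2 := by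
  have hg : HasFDerivAt (fieldDot f₁ f₂ u) (u.1 • fderiv ℝ f₁ x + u.2 • fderiv ℝ f₂ x) x :=
    (hf₁.hasFDerivAt.mul_const u.1).add (hf₂.hasFDerivAt.mul_const u.2)
  simp [Ddir, hg.fderiv, mul_comm]

lemma Ddir_fieldDot_sub_Ddir_fieldDot {x : ℝ × ℝ} (hf₁ : DifferentiableAt ℝ f₁ x)
    (hf₂ : DifferentiableAt ℝ f₂ x) (u v : ℝ × ℝ) :
    Ddir v (fieldDot f₁ f₂ u) x - Ddir u (fieldDot f₁ f₂ v) x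
      = (v.1 * u.2 - u.1 * v.2) * curlf f₁ f₂ x := by
  rw [Ddir_fieldDot hf₁ hf₂, Ddir_fieldDot hf₁ hf₂]
  simp only [Ddir, curlf, ContinuousLinearMap.apply_eq_fst_mul_add_snd_mul _ u,
    ContinuousLinearMap.apply_eq_fst_mul_add_snd_mul _ v]
  ring

end FieldDot

lemma VlineL_eq (u v : ℝ × ℝ) (f₁ f₂ : ℝ × ℝ → ℝ) :
    VlineL u v f₁ f₂ = -Xbeam u (fieldDot f₁ f₂ u) + Xbeam v (fieldDot f₁ f₂ v) :=
  rfl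

lemma Ddir_Ddir_VlineL {u v : ℝ × ℝ} (hu : u ≠ 0) (hv : v ≠ 0) {f₁ f₂ : ℝ × ℝ → ℝ}
    (hf₁ : IsC2c f₁) (hf₂ : IsC2c f₂) :
    Ddir u (Ddir v (VlineL u v f₁ f₂))
      = Ddir v (fieldDot f₁ f₂ u) - Ddir u (fieldDot f₁ f₂ v) := by
  have hg (w : ℝ × ℝ) : ContDiff ℝ 2 (fieldDot f₁ f₂ w) := hf₁.1.fieldDot hf₂.1 w
  have hg1 (w : ℝ × ℝ) : ContDiff ℝ 1 (fieldDot f₁ f₂ w) := (hg w).of_le one_le_two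
  have hgs (w : ℝ × ℝ) : HasCompactSupport (fieldDot f₁ f₂ w) := hf₁.2.fieldDot hf₂.2 w
  have hDv : Ddir v (VlineL u v f₁ f₂)
      = -(Xbeam u (Ddir v (fieldDot f₁ f₂ u)) + fieldDot f₁ f₂ v) := by
    rw [VlineL_eq, Ddir_add (differentiable_Xbeam (hg1 u) (hgs u) hu).neg
      (differentiable_Xbeam (hg1 v) (hgs v) hv), Ddir_neg, Ddir_Xbeam (hg1 u) (hgs u) hu,
      Ddir_Xbeam (hg1 v) (hgs v) hv, Xbeam_Ddir_self (hg1 v) (hgs v) hv, neg_add]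
  have hDvg : ContDiff ℝ 1 (Ddir v (fieldDot f₁ f₂ u)) := (hg u).Ddir v
  rw [hDv, Ddir_neg, Ddir_add (differentiable_Xbeam hDvg ((hgs u).Ddir v) hu)
    ((hg1 v).differentiable one_ne_zero), Ddir_Xbeam hDvg ((hgs u).Ddir v) hu,
    Xbeam_Ddir_self hDvg ((hgs u).Ddir v) hu]
  abel

lemma det_ne_zero_of_linearIndependent {u v : ℝ × ℝ} (huv : LinearIndependent ℝ ![u, v]) :
    v.1 * u.2 - u.1 * v.2 ≠ 0 := by
  intro hdet
  obtain ⟨-, hu₁⟩ := LinearIndependent.pair_iff.1 huv v.1 (-u.1) <|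
    Prod.ext (by simp; ring) (by simp; linear_combination hdet)
  obtain ⟨-, hu₂⟩ := LinearIndependent.pair_iff.1 huv v.2 (-u.2) <|
    Prod.ext (by simp; linear_combination -hdet) (by simp; ring)
  exact huv.ne_zero 0 (Prod.ext (neg_eq_zero.1 hu₁) (neg_eq_zero.1 hu₂))

theorem stmt2_general (u v : ℝ × ℝ)
    (huv : LinearIndependent ℝ ![u, v])
    (f₁ f₂ : ℝ × ℝ → ℝ) (hf₁ : IsC2c f₁) (hf₂ : IsC2c f₂) (x : ℝ × ℝ) :
    curlf f₁ f₂ x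
      = (1 / (v.1 * u.2 - u.1 * v.2)) * Ddir u (Ddir v (VlineL u v f₁ f₂)) x := by
  have hu : u ≠ 0 := by simpa using huv.ne_zero 0
  have hv : v ≠ 0 := by simpa using huv.ne_zero 1
  have hdet := det_ne_zero_of_linearIndependent huv
  rw [Ddir_Ddir_VlineL hu hv hf₁ hf₂, Pi.sub_apply,
    Ddir_fieldDot_sub_Ddir_fieldDot (hf₁.1.differentiable two_ne_zero x)
      (hf₂.1.differentiable two_ne_zero x)]
  field_simp

/-- `curl f = (1 / det(v,u)) · D_u D_v (L f)`. -/
theorem stmt2 (u v : ℝ × ℝ) (hu : u.1 ^ 2 + u.2 ^ 2 = 1) (hv : v.1 ^ 2 + v.2 ^ 2 = 1)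
    (huv : LinearIndependent ℝ ![u, v])
    (f₁ f₂ : ℝ × ℝ → ℝ) (hf₁ : IsC2c f₁) (hf₂ : IsC2c f₂) (x : ℝ × ℝ) :
    curlf f₁ f₂ x
      = (1 / (v.1 * u.2 - u.1 * v.2)) * Ddir u (Ddir v (VlineL u v f₁ f₂)) x :=
  stmt2_general u v huv f₁ f₂ hf₁ hf₂ x
end
end

section
/- Let u = (u₁,u₂), v = (v₁,v₂) be linearly independent unit vectors in ℝ² and let f = (f₁, f₂) be a vector field on ℝ² with f₁, f₂ ∈ C²_c(ℝ²). Then for every x ∈ ℝ², X_u f₂(x) - X_v f₂(x) = ∂(I f)/∂x₂ (x) - u₁ · X¹_u(curl f)(x) + v₁ · X¹_v(curl f)(x). -/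
open MeasureTheory Matrix

noncomputable section

/-! Differentiating under the integral sign gives `∂₂ X¹_w (f·w) = X¹_w (∂₂ (f·w))`, and pointwise
`∂₂ (f·w) = D_w f₂ - w₁ curl f`. Along the ray `t ↦ x + t w` the term `t D_w f₂` is `t (d/dt) f₂`,
so integrating by parts (the boundary terms vanish at `0` because of the factor `t`, and at `∞`
by compact support) turns `X¹_w (D_w f₂)` into `-X_w f₂`. Subtracting the identities for `w = u`
and `w = v` gives the theorem. -/

open Set Metric Filter

section Lines

variable {E F : Type*} [NormedAddCommGroup E] [NormedSpace ℝ E]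
  [NormedAddCommGroup F] [NormedSpace ℝ F] {u : E}

theorem isBounded_setOf_add_smul_mem (hu : u ≠ 0) {B K : Set E} (hB : Bornology.IsBounded B)
    (hK : Bornology.IsBounded K) : Bornology.IsBounded {t : ℝ | ∃ y ∈ B, y + t • u ∈ K} := by
  obtain ⟨R, hR⟩ := (hB.union hK).subset_closedBall 0
  refine (isBounded_closedBall (x := (0 : ℝ)) (r := 2 * R / ‖u‖)).subset ?_
  rintro t ⟨y, hyB, hyK⟩
  have hy : ‖y‖ ≤ R := by simpa using hR (Or.inl hyB)
  have hyt : ‖y + t • u‖ ≤ R := by simpa using hR (Or.inr hyK)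
  rw [mem_closedBall, dist_zero_right, Real.norm_eq_abs, le_div_iff₀ (norm_pos_iff.2 hu)]
  calc |t| * ‖u‖ = ‖(y + t • u) - y‖ := by
        rw [add_sub_cancel_left, norm_smul, Real.norm_eq_abs]
    _ ≤ ‖y + t • u‖ + ‖y‖ := norm_sub_le _ _
    _ ≤ 2 * R := by linarith

theorem HasCompactSupport.comp_add_smul {M : Type*} [Zero M] {h : E → M}
    (hh : HasCompactSupport h) (hu : u ≠ 0) (x : E) :
    HasCompactSupport fun t : ℝ => h (x + t • u) :=
  ((isBounded_setOf_add_smul_mem hu Bornology.isBounded_singleton hh.isBounded).subset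
    fun _ ht => ⟨x, rfl, subset_tsupport _ ht⟩).isCompact_closure

theorem integrable_smul_comp_add_smul {h : E → F} (hc : Continuous h)
    (hh : HasCompactSupport h) (hu : u ≠ 0) (x : E) :
    Integrable fun t : ℝ => t • h (x + t • u) :=
  (continuous_id.smul (hc.comp (by fun_prop))).integrable_of_hasCompactSupport
    (hh.comp_add_smul hu x).smul_left

theorem hasFDerivAt_integral_Ioi_smul_comp_add_smul {g : E → F} (hg : ContDiff ℝ 1 g)
    (hgc : HasCompactSupport g) (hu : u ≠ 0) (x : E) :
    HasFDerivAt (fun y => ∫ t in Ioi (0 : ℝ), t • g (y + t • u))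
      (∫ t in Ioi (0 : ℝ), t • fderiv ℝ g (x + t • u)) x := by
  have hg₁ := hg.continuous_fderiv one_ne_zero
  obtain ⟨C, hC⟩ := hg₁.bounded_above_of_compact_support (hgc.fderiv (𝕜 := ℝ))
  obtain ⟨T, hT⟩ := (isBounded_setOf_add_smul_mem hu (isBounded_ball (x := x) (r := 1))
    (hgc.fderiv (𝕜 := ℝ)).isBounded).subset_closedBall 0
  have hbound : ∀ t, ∀ y ∈ ball x 1,
      ‖t • fderiv ℝ g (y + t • u)‖ ≤ (closedBall (0 : ℝ) T).indicator (fun _ => T * C) t := by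
    intro t y hy
    by_cases ht : t ∈ closedBall (0 : ℝ) T
    · have htT : |t| ≤ T := by simpa using ht
      rw [indicator_of_mem ht, norm_smul, Real.norm_eq_abs]
      exact mul_le_mul htT (hC _) (norm_nonneg _) ((abs_nonneg t).trans htT)
    · rw [indicator_of_notMem ht, image_eq_zero_of_notMem_tsupport (f := fderiv ℝ g)
        fun hmem => ht (hT ⟨y, hy, hmem⟩), smul_zero, norm_zero]
  refine hasFDerivAt_integral_of_dominated_of_fderiv_le (μ := volume.restrict (Ioi 0))
    (F := fun y t => t • g (y + t • u)) (F' := fun y t => t • fderiv ℝ g (y + t • u))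
    (ball_mem_nhds x one_pos) (Eventually.of_forall fun y => (by fun_prop :
      Continuous fun t : ℝ => t • g (y + t • u)).aestronglyMeasurable)
    (integrable_smul_comp_add_smul hg.continuous hgc hu x).integrableOn
    (by fun_prop : Continuous fun t : ℝ => t • fderiv ℝ g (x + t • u)).aestronglyMeasurable
    (Eventually.of_forall hbound) ?_ (Eventually.of_forall fun t y _ => ?_)
  · exact (integrable_indicator_iff measurableSet_closedBall).2
      (continuousOn_const.integrableOn_compact (isCompact_closedBall 0 T))
  · have hline : HasFDerivAt (fun y : E => y + t • u) (ContinuousLinearMap.id ℝ E) y :=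
      (hasFDerivAt_id y).add_const _
    exact ((hg.differentiable one_ne_zero _).hasFDerivAt.comp y hline).const_smul t

variable [CompleteSpace F]

theorem integral_Ioi_smul_fderiv_comp_add_smul {g : E → F} (hg : ContDiff ℝ 1 g)
    (hgc : HasCompactSupport g) (hu : u ≠ 0) (x : E) :
    ∫ t in Ioi (0 : ℝ), t • fderiv ℝ g (x + t • u) u = -∫ t in Ioi (0 : ℝ), g (x + t • u) := by
  set φ : ℝ → F := fun t => g (x + t • u)
  have hφ : ContDiff ℝ 1 φ := hg.comp (by fun_prop)
  have hφc : HasCompactSupport φ := hgc.comp_add_smul hu x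
  have hφ' : ∀ t, HasDerivAt φ (fderiv ℝ g (x + t • u) u) t := fun t =>
    (hg.differentiable one_ne_zero _).hasFDerivAt.comp_hasDerivAt t
      (by simpa using ((hasDerivAt_id t).smul_const u).const_add x)
  have hprod : ∀ t, deriv (fun s => s • φ s) t = φ t + t • fderiv ℝ g (x + t • u) u :=
    fun t => ((hasDerivAt_id t).smul (hφ' t)).deriv.trans (by simp [add_comm])
  have hint₁ : Integrable φ := hφ.continuous.integrable_of_hasCompactSupport hφc
  have hint₂ : Integrable fun t : ℝ => t • fderiv ℝ g (x + t • u) u :=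
    integrable_smul_comp_add_smul ((hg.continuous_fderiv one_ne_zero).clm_apply continuous_const)
      (hgc.fderiv_apply (𝕜 := ℝ) u) hu x
  have key := HasCompactSupport.integral_Ioi_deriv_eq (f := fun s => s • φ s)
    (contDiff_id.smul hφ) hφc.smul_left 0
  rw [funext hprod, integral_add hint₁.integrableOn hint₂.integrableOn, zero_smul, neg_zero] at key
  exact eq_neg_of_add_eq_zero_right key

end Lines

section Plane

variable {f₁ f₂ : ℝ × ℝ → ℝ} {u : ℝ × ℝ}

theorem IsC2c.dot (hf₁ : IsC2c f₁) (hf₂ : IsC2c f₂) (a b : ℝ) :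
    IsC2c fun y => f₁ y * a + f₂ y * b :=
  ⟨(hf₁.1.mul contDiff_const).add (hf₂.1.mul contDiff_const),
    hf₁.2.mul_right.add hf₂.2.mul_right⟩

theorem IsC2c.continuous_curlf (hf₁ : IsC2c f₁) (hf₂ : IsC2c f₂) : Continuous (curlf f₁ f₂) :=
  ((hf₂.1.continuous_fderiv two_ne_zero).clm_apply continuous_const).sub
    ((hf₁.1.continuous_fderiv two_ne_zero).clm_apply continuous_const)

theorem IsC2c.hasCompactSupport_curlf (hf₁ : IsC2c f₁) (hf₂ : IsC2c f₂) :
    HasCompactSupport (curlf f₁ f₂) :=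
  (hf₂.2.fderiv_apply (𝕜 := ℝ) _).sub (hf₁.2.fderiv_apply (𝕜 := ℝ) _)

theorem fderiv_dot_apply_zero_one {y : ℝ × ℝ} (h₁ : DifferentiableAt ℝ f₁ y)
    (h₂ : DifferentiableAt ℝ f₂ y) (u : ℝ × ℝ) :
    fderiv ℝ (fun y => f₁ y * u.1 + f₂ y * u.2) y (0, 1)
      = fderiv ℝ f₂ y u - u.1 * curlf f₁ f₂ y := by
  have hu : fderiv ℝ f₂ y u = u.1 * fderiv ℝ f₂ y (1, 0) + u.2 * fderiv ℝ f₂ y (0, 1) := by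
    have hbasis : u = u.1 • ((1 : ℝ), (0 : ℝ)) + u.2 • ((0 : ℝ), (1 : ℝ)) := by simp
    conv_lhs => rw [hbasis, map_add, map_smul, map_smul, smul_eq_mul, smul_eq_mul]
  rw [((h₁.hasFDerivAt.mul_const u.1).fun_add (h₂.hasFDerivAt.mul_const u.2)).fderiv, hu]
  simp only [_root_.add_apply, _root_.smul_apply, smul_eq_mul, curlf]
  ring

theorem hasFDerivAt_Xmom {g : ℝ × ℝ → ℝ} (hg : ContDiff ℝ 1 g) (hgc : HasCompactSupport g)
    (hu : u ≠ 0) (x : ℝ × ℝ) :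
    HasFDerivAt (Xmom u g) (∫ t in Ioi (0 : ℝ), t • fderiv ℝ g (x + t • u)) x :=
  hasFDerivAt_integral_Ioi_smul_comp_add_smul hg hgc hu x

theorem fderiv_Xmom_dot_apply_zero_one (hf₁ : IsC2c f₁) (hf₂ : IsC2c f₂) (hu : u ≠ 0)
    (x : ℝ × ℝ) :
    fderiv ℝ (Xmom u fun y => f₁ y * u.1 + f₂ y * u.2) x (0, 1)
      = -Xbeam u f₂ x - u.1 * Xmom u (curlf f₁ f₂) x := by
  have hg := hf₁.dot hf₂ u.1 u.2
  rw [(hasFDerivAt_Xmom (hg.1.of_le one_le_two) hg.2 hu x).fderiv,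
    ContinuousLinearMap.integral_apply (integrable_smul_comp_add_smul
      (hg.1.continuous_fderiv two_ne_zero) (hg.2.fderiv (𝕜 := ℝ)) hu x).integrableOn]
  have hpt : ∀ t : ℝ, (t • fderiv ℝ (fun y => f₁ y * u.1 + f₂ y * u.2) (x + t • u)) (0, 1)
      = t • fderiv ℝ f₂ (x + t • u) u - u.1 * (t • curlf f₁ f₂ (x + t • u)) := fun t => by
    rw [_root_.smul_apply, fderiv_dot_apply_zero_one
      (hf₁.1.differentiable two_ne_zero _) (hf₂.1.differentiable two_ne_zero _),
      smul_eq_mul, smul_eq_mul]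
    ring
  have hint₁ := integrable_smul_comp_add_smul
    ((hf₂.1.continuous_fderiv two_ne_zero).clm_apply continuous_const)
    (hf₂.2.fderiv_apply (𝕜 := ℝ) u) hu x
  have hint₂ := (integrable_smul_comp_add_smul (hf₁.continuous_curlf hf₂)
    (hf₁.hasCompactSupport_curlf hf₂) hu x).const_mul u.1
  simp_rw [hpt]
  rw [integral_sub hint₁.integrableOn hint₂.integrableOn,
    integral_Ioi_smul_fderiv_comp_add_smul (hf₂.1.of_le one_le_two) hf₂.2 hu x,
    integral_const_mul]
  rfl

end Plane

theorem stmt9_general (u v : ℝ × ℝ) (hu : u.1 ^ 2 + u.2 ^ 2 = 1) (hv : v.1 ^ 2 + v.2 ^ 2 = 1)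
    (f₁ f₂ : ℝ × ℝ → ℝ) (hf₁ : IsC2c f₁) (hf₂ : IsC2c f₂) (x : ℝ × ℝ) :
    Xbeam u f₂ x - Xbeam v f₂ x
      = fderiv ℝ (VmomL u v f₁ f₂) x (0, 1)
        - u.1 * Xmom u (curlf f₁ f₂) x + v.1 * Xmom v (curlf f₁ f₂) x := by
  have hu₀ : u ≠ 0 := by rintro rfl; norm_num at hu
  have hv₀ : v ≠ 0 := by rintro rfl; norm_num at hv
  have hdiff : ∀ {w : ℝ × ℝ}, w ≠ 0 →
      DifferentiableAt ℝ (Xmom w fun y => f₁ y * w.1 + f₂ y * w.2) x := fun hw =>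
    let hg := hf₁.dot hf₂ _ _
    (hasFDerivAt_Xmom (hg.1.of_le one_le_two) hg.2 hw x).differentiableAt
  have hVmomL : fderiv ℝ (VmomL u v f₁ f₂) x
      = -fderiv ℝ (Xmom u fun y => f₁ y * u.1 + f₂ y * u.2) x
        + fderiv ℝ (Xmom v fun y => f₁ y * v.1 + f₂ y * v.2) x :=
    ((hdiff hu₀).hasFDerivAt.neg.add (hdiff hv₀).hasFDerivAt).fderiv
  rw [hVmomL, _root_.add_apply, _root_.neg_apply, fderiv_Xmom_dot_apply_zero_one hf₁ hf₂ hu₀,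
    fderiv_Xmom_dot_apply_zero_one hf₁ hf₂ hv₀]
  ring

/-- `X_u f₂ - X_v f₂ = ∂(I f)/∂x₂ - u₁ X¹_u(curl f) + v₁ X¹_v(curl f)`. -/
theorem stmt9 (u v : ℝ × ℝ) (hu : u.1 ^ 2 + u.2 ^ 2 = 1) (hv : v.1 ^ 2 + v.2 ^ 2 = 1)
    (huv : LinearIndependent ℝ ![u, v])
    (f₁ f₂ : ℝ × ℝ → ℝ) (hf₁ : IsC2c f₁) (hf₂ : IsC2c f₂) (x : ℝ × ℝ) :
    Xbeam u f₂ x - Xbeam v f₂ x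
      = fderiv ℝ (VmomL u v f₁ f₂) x (0, 1)
        - u.1 * Xmom u (curlf f₁ f₂) x + v.1 * Xmom v (curlf f₁ f₂) x :=
  stmt9_general u v hu hv f₁ f₂ hf₁ hf₂ x
end
end
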